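/- For all parameters A, B, C ∈ ℂ with C ≠ 0 and (C;q)_n ≠ 0 for all n, and all x, y ∈ ℂ with |x| < 1 and |y| < 1, the bibasic Humbert function satisfies (1−A)·Φ₁(qA,B;qC;q,q₁;x,y) = (1−A/C)·Φ₁(A,B;qC;q,q₁;x,y) + (A/C)(1−C)·Φ₁(A,B;C;q,q₁;x,y). (Equation (2.8), with A = q^a, C = q^c, so q^{a−c} = A/C.) -/

import Mathlib

open Complex

/-- The q-shifted factorial (z;q)_n = prod_{r=0}^{n-1} (1 - z q^r). -/
noncomputable def qPoch (q z : ℂ) (n : ℕ) : ℂ :=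
  ∏ r ∈ Finset.range n, (1 - z * q ^ r)

/-- The bibasic Humbert hypergeometric function Φ₁ on two independent bases q and q₁. -/
noncomputable def Phi1 (q q1 A B C x y : ℂ) : ℂ :=
  ∑' p : ℕ × ℕ,
    qPoch q A (p.1 + p.2) * qPoch q1 B p.1 /
      (qPoch q C (p.1 + p.2) * qPoch q1 q1 p.1 * qPoch q q p.2) * x ^ p.1 * y ^ p.2

/-- The Jackson p-derivative. -/
noncomputable def jackson (p : ℂ) (f : ℂ → ℂ) (x : ℂ) : ℂ :=
  (f x - f (p * x)) / ((1 - p) * x)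

/-!
Termwise the identity is the contiguous relation
`(1 - A) (qA;q)ₙ / (qC;q)ₙ = (1 - A/C) (A;q)ₙ / (qC;q)ₙ + (A/C) (1 - C) (A;q)ₙ / (C;q)ₙ`,
which follows from `(1 - z) (qz;q)ₙ = (z;q)ₙ (1 - z qⁿ)` for `z = A` and `z = C`.
It passes to the sums because the three series converge absolutely: `(z;q)ₙ` tends to the
infinite product `∏ (1 - z qʳ)`, which is nonzero when no factor vanishes, so the coefficients of
`Φ₁` are bounded and the double series is dominated by `∑ |x|ˡ |y|ᵏ`.
-/

open Filter Topology

lemma qPoch_succ (q z : ℂ) (n : ℕ) : qPoch q z (n + 1) = qPoch q z n * (1 - z * q ^ n) :=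
  Finset.prod_range_succ _ _

lemma qPoch_succ' (q z : ℂ) (n : ℕ) : qPoch q z (n + 1) = (1 - z) * qPoch q (q * z) n := by
  rw [qPoch, Finset.prod_range_succ', pow_zero, mul_one, mul_comm, qPoch]
  exact congrArg _ (Finset.prod_congr rfl fun r _ => by ring)

lemma qPoch_shift_ne_zero (q : ℂ) {z : ℂ} (hz : ∀ n, qPoch q z n ≠ 0) (n : ℕ) :
    qPoch q (q * z) n ≠ 0 :=
  right_ne_zero_of_mul (qPoch_succ' q z n ▸ hz (n + 1))

section Convergence

variable {q : ℂ}

lemma summable_norm_mul_pow (hq : ‖q‖ < 1) (z : ℂ) : Summable fun r : ℕ => ‖z * q ^ r‖ := by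
  simpa [norm_mul, norm_pow] using (summable_geometric_of_lt_one (norm_nonneg q) hq).mul_left ‖z‖

lemma tendsto_qPoch (hq : ‖q‖ < 1) (z : ℂ) :
    Tendsto (qPoch q z) atTop (𝓝 (∏' r, (1 - z * q ^ r))) := by
  have hsum : Summable fun r => ‖-(z * q ^ r)‖ := by simpa using summable_norm_mul_pow hq z
  have := (multipliable_one_add_of_summable hsum).tendsto_prod_tprod_nat
  simp only [← sub_eq_add_neg] at this
  exact this

lemma exists_norm_qPoch_le (hq : ‖q‖ < 1) (z : ℂ) : ∃ M, ∀ n, ‖qPoch q z n‖ ≤ M :=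
  isBounded_iff_forall_norm_le.1 (Metric.isBounded_range_of_tendsto _ (tendsto_qPoch hq z))
    |>.imp fun _ h n => h _ (Set.mem_range_self n)

lemma tprod_one_sub_mul_pow_ne_zero (hq : ‖q‖ < 1) {z : ℂ} (hz : ∀ n, qPoch q z n ≠ 0) :
    ∏' r, (1 - z * q ^ r) ≠ 0 := by
  have hfactor : ∀ r, 1 + -(z * q ^ r) ≠ 0 := fun r => by
    have := hz (r + 1)
    rw [qPoch_succ] at this
    simpa [← sub_eq_add_neg] using right_ne_zero_of_mul this
  have hsum : Summable fun r => ‖-(z * q ^ r)‖ := by simpa using summable_norm_mul_pow hq z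
  simpa only [← sub_eq_add_neg] using tprod_one_add_ne_zero_of_summable hfactor hsum

lemma exists_norm_inv_qPoch_le (hq : ‖q‖ < 1) {z : ℂ} (hz : ∀ n, qPoch q z n ≠ 0) :
    ∃ M, ∀ n, ‖(qPoch q z n)⁻¹‖ ≤ M :=
  isBounded_iff_forall_norm_le.1 (Metric.isBounded_range_of_tendsto _
    ((tendsto_qPoch hq z).inv₀ (tprod_one_sub_mul_pow_ne_zero hq hz)))
    |>.imp fun _ h n => h _ (Set.mem_range_self n)

lemma qPoch_self_ne_zero (hq : ‖q‖ < 1) (n : ℕ) : qPoch q q n ≠ 0 := by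
  refine Finset.prod_ne_zero_iff.2 fun r _ => sub_ne_zero.2 fun h => ?_
  have : ‖q * q ^ r‖ < 1 := by
    rw [← pow_succ', norm_pow]
    exact pow_lt_one₀ (norm_nonneg q) hq r.succ_ne_zero
  simp [← h] at this

end Convergence

noncomputable def phi1Term (q q1 A B C x y : ℂ) (p : ℕ × ℕ) : ℂ :=
  qPoch q A (p.1 + p.2) * qPoch q1 B p.1 /
    (qPoch q C (p.1 + p.2) * qPoch q1 q1 p.1 * qPoch q q p.2) * x ^ p.1 * y ^ p.2

lemma Phi1_eq_tsum (q q1 A B C x y : ℂ) :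
    Phi1 q q1 A B C x y = ∑' p, phi1Term q q1 A B C x y p := rfl

lemma summable_mul_pow_mul_pow {a : ℕ × ℕ → ℂ} {M : ℝ} (ha : ∀ p, ‖a p‖ ≤ M) {x y : ℂ}
    (hx : ‖x‖ < 1) (hy : ‖y‖ < 1) : Summable fun p : ℕ × ℕ => a p * x ^ p.1 * y ^ p.2 := by
  have hgeom := (summable_geometric_of_lt_one (norm_nonneg x) hx).mul_of_nonneg
    (summable_geometric_of_lt_one (norm_nonneg y) hy) (fun _ => by positivity)
    (fun _ => by positivity)
  refine Summable.of_norm_bounded (hgeom.mul_left M) fun p => ?_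
  rw [norm_mul, norm_mul, norm_pow, norm_pow, mul_assoc]
  gcongr
  exact ha p

lemma summable_phi1Term {q q1 : ℂ} (hq : ‖q‖ < 1) (hq1 : ‖q1‖ < 1) (A B : ℂ) {C : ℂ}
    (hC : ∀ n, qPoch q C n ≠ 0) {x y : ℂ} (hx : ‖x‖ < 1) (hy : ‖y‖ < 1) :
    Summable (phi1Term q q1 A B C x y) := by
  obtain ⟨MA, hA⟩ := exists_norm_qPoch_le hq A
  obtain ⟨MB, hB⟩ := exists_norm_qPoch_le hq1 B
  obtain ⟨MC, hCinv⟩ := exists_norm_inv_qPoch_le hq hC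
  obtain ⟨M1, hq1inv⟩ := exists_norm_inv_qPoch_le hq1 (qPoch_self_ne_zero hq1)
  obtain ⟨Mq, hqinv⟩ := exists_norm_inv_qPoch_le hq (qPoch_self_ne_zero hq)
  refine summable_mul_pow_mul_pow (M := MA * MB * (MC * M1 * Mq)) (fun p => ?_) hx hy
  have h0 : ∀ {M : ℝ} {f : ℕ → ℂ}, (∀ n, ‖f n‖ ≤ M) → 0 ≤ M := fun h => (norm_nonneg _).trans (h 0)
  simp only [div_eq_mul_inv, mul_inv, norm_mul]
  have := h0 hA; have := h0 hB; have := h0 hCinv; have := h0 hq1inv; have := h0 hqinv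
  gcongr
  exacts [hA _, hB _, hCinv _, hq1inv _, hqinv _]

lemma qPoch_contiguous (q A : ℂ) {C : ℂ} (hC : ∀ n, qPoch q C n ≠ 0) (hC0 : C ≠ 0) (n : ℕ) :
    (1 - A) * qPoch q (q * A) n / qPoch q (q * C) n =
      (1 - A / C) * qPoch q A n / qPoch q (q * C) n
        + A / C * (1 - C) * qPoch q A n / qPoch q C n := by
  have hA := (qPoch_succ' q A n).symm.trans (qPoch_succ q A n)
  have hqC := (qPoch_succ' q C n).symm.trans (qPoch_succ q C n)
  have hqC0 := qPoch_shift_ne_zero q hC n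
  have hAC : A / C * C = A := div_mul_cancel₀ A hC0
  rw [hA, div_add_div _ _ hqC0 (hC n), div_eq_div_iff hqC0 (mul_ne_zero hqC0 (hC n))]
  linear_combination (-(qPoch q (q * C) n * (A / C) * qPoch q A n)) * hqC +
    (qPoch q A n * qPoch q C n * qPoch q (q * C) n * q ^ n) * hAC

lemma phi1Term_contiguous (q q1 A B : ℂ) {C : ℂ} (hC : ∀ n, qPoch q C n ≠ 0) (hC0 : C ≠ 0)
    (x y : ℂ) (p : ℕ × ℕ) :
    (1 - A) * phi1Term q q1 (q * A) B (q * C) x y p =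
      (1 - A / C) * phi1Term q q1 A B (q * C) x y p
        + A / C * (1 - C) * phi1Term q q1 A B C x y p := by
  simp only [phi1Term]
  linear_combination (qPoch q1 B p.1 / (qPoch q1 q1 p.1 * qPoch q q p.2) * x ^ p.1 * y ^ p.2) *
    qPoch_contiguous q A hC hC0 (p.1 + p.2)

theorem stmt7_general (q q1 A B C x y : ℂ)
    (hq1 : ‖q‖ < 1)
    (hq11 : ‖q1‖ < 1)
    (hC : ∀ n : ℕ, qPoch q C n ≠ 0)
    (hC0 : C ≠ 0) (hx : ‖x‖ < 1) (hy : ‖y‖ < 1) :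
    (1 - A) * Phi1 q q1 (q * A) B (q * C) x y =
      (1 - A / C) * Phi1 q q1 A B (q * C) x y
        + (A / C) * (1 - C) * Phi1 q q1 A B C x y := by
  simp only [Phi1_eq_tsum, ← tsum_mul_left]
  rw [← ((summable_phi1Term hq1 hq11 A B (qPoch_shift_ne_zero q hC) hx hy).mul_left _).tsum_add
    ((summable_phi1Term hq1 hq11 A B hC hx hy).mul_left _)]
  exact tsum_congr (phi1Term_contiguous q q1 A B hC hC0 x y)

theorem stmt7 (q q1 A B C x y : ℂ)
    (hq0 : 0 < ‖q‖) (hq1 : ‖q‖ < 1)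
    (hq10 : 0 < ‖q1‖) (hq11 : ‖q1‖ < 1)
    (hC : ∀ n : ℕ, qPoch q C n ≠ 0)
    (hC0 : C ≠ 0) (hx : ‖x‖ < 1) (hy : ‖y‖ < 1) :
    (1 - A) * Phi1 q q1 (q * A) B (q * C) x y =
      (1 - A / C) * Phi1 q q1 A B (q * C) x y
        + (A / C) * (1 - C) * Phi1 q q1 A B C x y :=
  stmt7_general q q1 A B C x y hq1 hq11 hC hC0 hx hy
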